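/- Two-vertex reducible graphs have doubled denominators: if G is the two-vertex join of G_1 and G_2, with edges 1, 2 ∈ G_1 and 3, 4 ∈ G_2, then the product Ψ^{13,24}_G · Ψ^{14,23}_G is a perfect square of a polynomial, namely (Ψ^{13,24}_G)^2. -/

import Mathlib

/-- A finite multigraph with oriented edges: each edge has a source and a target vertex.
Self-loops (src = tgt) and parallel edges are allowed. -/
structure Multigraph (E V : Type*) where
  src : E → V
  tgt : E → V

namespace Multigraph

variable {E V : Type*}

/-- Two vertices are adjacent via an edge of the subset `F`. -/
def Adj (G : Multigraph E V) (F : Finset E) (a b : V) : Prop :=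
  ∃ e ∈ F, (G.src e = a ∧ G.tgt e = b) ∨ (G.src e = b ∧ G.tgt e = a)

/-- Reachability (connectivity) using only edges in `F`. -/
def Reach (G : Multigraph E V) (F : Finset E) : V → V → Prop :=
  Relation.ReflTransGen (G.Adj F)

/-- `T` is (the edge set of) a spanning tree of `G`: it connects all vertices and has
`|V| - 1` edges. -/
def IsSpanningTree (G : Multigraph E V) [Fintype V] (T : Finset E) : Prop :=
  (∀ v w : V, G.Reach T v w) ∧ T.card + 1 = Fintype.card V

/-- `G` is connected. -/
def Connected (G : Multigraph E V) [Fintype E] [Fintype V] : Prop :=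
  ∀ v w : V, G.Reach Finset.univ v w

/-- The signed incidence matrix entry of edge `e` at vertex `v`:
`+1` if `e` begins at `v`, `-1` if `e` ends at `v`, `0` otherwise (in particular `0`
for self-loops). -/
def inc (G : Multigraph E V) (R : Type*) [Ring R] [DecidableEq V] (e : E) (v : V) : R :=
  (if G.src e = v then 1 else 0) - (if G.tgt e = v then 1 else 0)

open Classical in
/-- The Kirchhoff (graph) polynomial `Ψ_G = Σ_T Π_{e ∉ T} α_e`, sum over spanning trees. -/
noncomputable def kirchhoff (G : Multigraph E V) [Fintype E] [DecidableEq E] [Fintype V] :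
    MvPolynomial E ℚ :=
  ∑ T : Finset E, if G.IsSpanningTree T then ∏ e ∈ Tᶜ, MvPolynomial.X e else 0

/-- `F` is a spanning forest of `G` whose trees realize the partition `parts` of a subset of
the vertices: it has `|V| - |parts|` edges (forcing acyclicity), vertices in the same part
are connected, vertices in different parts are disconnected, and every vertex lies in the
tree of some part. -/
def IsSpanningForest (G : Multigraph E V) [Fintype V] (parts : Finset (Finset V))
    (F : Finset E) : Prop :=
  F.card + parts.card = Fintype.card V ∧
  (∀ p ∈ parts, ∀ v ∈ p, ∀ w ∈ p, G.Reach F v w) ∧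
  (∀ p ∈ parts, ∀ q ∈ parts, p ≠ q → ∀ v ∈ p, ∀ w ∈ q, ¬ G.Reach F v w) ∧
  (∀ v : V, ∃ p ∈ parts, ∃ w ∈ p, G.Reach F v w)

open Classical in
/-- The spanning forest polynomial `Φ^P_G = Σ_F Π_{e ∉ F} α_e`. -/
noncomputable def forestPoly (G : Multigraph E V) [Fintype E] [DecidableEq E] [Fintype V]
    (parts : Finset (Finset V)) : MvPolynomial E ℚ :=
  ∑ F : Finset E, if G.IsSpanningForest parts F then ∏ e ∈ Fᶜ, MvPolynomial.X e else 0

end Multigraph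

/-- `parts` is a set partition (of the union of its parts): parts are nonempty and
pairwise disjoint. -/
def IsSetPartition {V : Type*} (parts : Finset (Finset V)) : Prop :=
  ∅ ∉ parts ∧ ∀ p ∈ parts, ∀ q ∈ parts, p ≠ q → Disjoint p q

/-- `parts` is a set partition of the finite vertex set `W`. -/
def IsPartitionOf {V : Type*} (W : Finset V) (parts : Finset (Finset V)) : Prop :=
  IsSetPartition parts ∧ (∀ p ∈ parts, p ⊆ W) ∧ ∀ v ∈ W, ∃ p ∈ parts, v ∈ p
namespace Multigraph

variable {E V : Type*}

/-- The matrix `M_G(·,·)_K`: the reduced block matrix `[[A, 𝓔],[-𝓔ᵀ, 0]]` (one vertex `v0`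
removed) in which the variables of the edges in `K` have been set to `0`. -/
noncomputable def bigMatK (G : Multigraph E V) [DecidableEq E] [DecidableEq V] (v0 : V) (K : Finset E) :
    Matrix (E ⊕ {v : V // v ≠ v0}) (E ⊕ {v : V // v ≠ v0}) (MvPolynomial E ℚ) :=
  Matrix.fromBlocks (Matrix.diagonal fun e => if e ∈ K then 0 else MvPolynomial.X e)
    (Matrix.of fun e (v : {v : V // v ≠ v0}) => G.inc (MvPolynomial E ℚ) e ↑v)
    (Matrix.of fun (v : {v : V // v ≠ v0}) e => -G.inc (MvPolynomial E ℚ) e ↑v)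
    0

/-- The Dodgson polynomial `Ψ^{I,J}_{G,K}`: the determinant of `M_G` with the rows indexed
by `I` and the columns indexed by `J` deleted and the variables of `K` set to zero.  The
rows and columns are enumerated in increasing order, which fixes the sign. -/
noncomputable def dodgson (G : Multigraph E V) [Fintype E] [LinearOrder E] [Fintype V]
    [DecidableEq V] (v0 : V) (I J K : Finset E) : MvPolynomial E ℚ :=
  if h : I.card = J.card then
    Matrix.det (Matrix.of fun r c : Fin (Iᶜ.card) ⊕ {v : V // v ≠ v0} =>
      G.bigMatK v0 K
        (Sum.map (fun i => ((Iᶜ.orderIsoOfFin rfl) i : E)) id r)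
        (Sum.map (fun j => ((Jᶜ.orderIsoOfFin (by simp [Finset.card_compl, h])) j : E)) id c))
  else 0

/-- The determinant of the square submatrix of the reduced signed incidence matrix of `G`
(with the column of the vertex `v0` removed) given by the rows indexed by the edge set `S`
(rows and columns enumerated in increasing order); junk value `0` if `S` does not have
`|V| - 1` elements. -/
noncomputable def rowDet (G : Multigraph E V) [Fintype E] [LinearOrder E] [Fintype V]
    [LinearOrder V] (v0 : V) (S : Finset E) : ℚ :=
  if h : S.card = Fintype.card V - 1 then
    Matrix.det (Matrix.of fun i j : Fin (Fintype.card V - 1) =>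
      G.inc ℚ ((S.orderIsoOfFin h) i : E)
        (((Finset.univ.erase v0).orderIsoOfFin
          (by rw [Finset.card_erase_of_mem (Finset.mem_univ v0), Finset.card_univ])) j : V))
  else 0

/-- `𝓔_G(S)`: the determinant of the reduced incidence matrix with the rows `S` deleted
(and the column of `v0` deleted). -/
noncomputable def detE (G : Multigraph E V) [Fintype E] [LinearOrder E] [Fintype V]
    [LinearOrder V] (v0 : V) (S : Finset E) : ℚ :=
  G.rowDet v0 Sᶜ

end Multigraph

/-!
Write `D(i, j; k, l)` for the determinant of `M = M_G` with rows `i, j` replaced by the unit rows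
`eₖ, eₗ`; up to sign it is the Dodgson polynomial `Ψ^{ij,kl}`. Jacobi's theorem writes
`det M · D(i, j; k, l)` as a `2 × 2` minor of `adj M`, whose edge block is symmetric because
`Mᵀ = S M S` for a diagonal sign matrix `S`. As `det M ≠ 0` for connected `G`, this gives the
Plücker relation `D(1, 3; 2, 4) = D(1, 4; 2, 3) + D(1, 2; 3, 4)`.

For a two-vertex join `D(1, 2; 3, 4) = 0` (for arbitrary edge weights): take currents on the edges
of `G₁` and potentials that are constant on the vertices of `G₂`. Modulo constant potentials these
form a space of dimension `|E₁| + |V₁| - 2`, and such a vector is killed by the matrix as soon as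
it satisfies Ohm's law on `E₁ \ {1, 2}` and Kirchhoff's law on `V₁`, which is `|E₁| + |V₁| - 3`
conditions since Kirchhoff's laws on `V₁` sum to zero.
-/

open Matrix Function

namespace Matrix

variable {R : Type*} [CommRing R] {m n : Type*} [DecidableEq n]

def updateTwoRows (A : Matrix n n R) (i j k l : n) : Matrix n n R :=
  (A.updateRow i (Pi.single k 1)).updateRow j (Pi.single l 1)

theorem updateTwoRows_apply_left {i j k l : n} (A : Matrix n n R) (hij : i ≠ j) :
    A.updateTwoRows i j k l i = Pi.single k 1 := by
  rw [updateTwoRows, updateRow_ne hij, updateRow_self]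

theorem updateTwoRows_apply_right {i j k l : n} (A : Matrix n n R) :
    A.updateTwoRows i j k l j = Pi.single l 1 := by
  rw [updateTwoRows, updateRow_self]

theorem updateTwoRows_apply_of_ne {i j k l r : n} (A : Matrix n n R) (hi : r ≠ i)
    (hj : r ≠ j) : A.updateTwoRows i j k l r = A r := by
  rw [updateTwoRows, updateRow_ne hj, updateRow_ne hi]

theorem updateTwoRows_mulVec [Fintype n] (A : Matrix n n R) (i j k l : n) (y : n → R) :
    A.updateTwoRows i j k l *ᵥ y = update (update (A *ᵥ y) i (y k)) j (y l) := by
  simp only [updateTwoRows, updateRow_mulVec, single_one_dotProduct]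

theorem updateTwoRows_mul [Fintype n] (A B : Matrix n n R) (i j k l : n) :
    A.updateTwoRows i j k l * B = ((A * B).updateRow i (B k)).updateRow j (B l) := by
  simp only [updateTwoRows, updateRow_mul, single_one_vecMul, row]

theorem map_updateTwoRows {S : Type*} [CommRing S] (f : R →+* S) (A : Matrix n n R)
    (i j k l : n) : (A.updateTwoRows i j k l).map f = (A.map f).updateTwoRows i j k l := by
  have hsingle : ∀ k : n, ⇑f ∘ Pi.single k (1 : R) = Pi.single k 1 := fun k => by
    ext x
    simp [Pi.single_apply, apply_ite f]
  simp only [updateTwoRows, map_updateRow, hsingle]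

end Matrix

section PairSumEquiv

variable {m n : Type*} [DecidableEq n] {i j : n} {f : m → n}

theorem bijective_sumElim_pair (hij : i ≠ j) (hf : Injective f)
    (hrange : ∀ y, y ∈ Set.range f ↔ y ≠ i ∧ y ≠ j) : Bijective (Sum.elim ![i, j] f) := by
  have hfi : ∀ x, f x ≠ i := fun x => ((hrange _).mp ⟨x, rfl⟩).1
  have hfj : ∀ x, f x ≠ j := fun x => ((hrange _).mp ⟨x, rfl⟩).2
  refine ⟨?_, fun y => ?_⟩
  · rintro (u | x) (u' | x') h
    · fin_cases u <;> fin_cases u' <;> simp_all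
    · fin_cases u <;> simp_all [Ne.symm (hfi x'), Ne.symm (hfj x')]
    · fin_cases u' <;> simp_all
    · exact congrArg _ (hf h)
  · by_cases hi : y = i
    · exact ⟨Sum.inl 0, by simp [hi]⟩
    by_cases hj : y = j
    · exact ⟨Sum.inl 1, by simp [hj]⟩
    obtain ⟨x, rfl⟩ := (hrange y).mpr ⟨hi, hj⟩
    exact ⟨Sum.inr x, rfl⟩

noncomputable def pairSumEquiv (hij : i ≠ j) (hf : Injective f)
    (hrange : ∀ y, y ∈ Set.range f ↔ y ≠ i ∧ y ≠ j) : Fin 2 ⊕ m ≃ n :=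
  Equiv.ofBijective _ (bijective_sumElim_pair hij hf hrange)

end PairSumEquiv

namespace Matrix

section Minors

variable {R : Type*} [CommRing R] {m n : Type*} [DecidableEq n] [Fintype n]
  [DecidableEq m] [Fintype m] {i j k l : n}

theorem det_submatrix_equiv_eq_units_smul (A : Matrix n n R) (e₁ e₂ : m ≃ n) :
    ∃ s : ℤˣ, (A.submatrix e₁ e₂).det = s • A.det := by
  refine ⟨Equiv.Perm.sign (e₁.trans e₂.symm), ?_⟩
  have h : A.submatrix e₁ e₂ = (A.submatrix e₂ e₂).submatrix (e₁.trans e₂.symm) id := by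
    ext
    simp
  rw [h, det_permute, det_submatrix_equiv_self, Units.smul_def, zsmul_eq_mul]

theorem det_submatrix_eq_units_smul_det_updateTwoRows (A : Matrix n n R) (hij : i ≠ j)
    (hkl : k ≠ l) {f g : m → n} (hf : Injective f) (hg : Injective g)
    (hfr : ∀ y, y ∈ Set.range f ↔ y ≠ i ∧ y ≠ j) (hgr : ∀ y, y ∈ Set.range g ↔ y ≠ k ∧ y ≠ l) :
    ∃ s : ℤˣ, (A.submatrix f g).det = s • (A.updateTwoRows i j k l).det := by
  set B := A.updateTwoRows i j k l
  set τ := pairSumEquiv hkl hg hgr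
  have hrow : ∀ x, B (f x) = A (f x) := fun x =>
    updateTwoRows_apply_of_ne A ((hfr _).mp ⟨x, rfl⟩).1 ((hfr _).mp ⟨x, rfl⟩).2
  have hblock : B.submatrix (pairSumEquiv hij hf hfr) τ =
      fromBlocks 1 0 (of fun x u => B (f x) (τ (Sum.inl u))) (A.submatrix f g) := by
    have hgk : ∀ y, g y ≠ k := fun y => ((hgr _).mp ⟨y, rfl⟩).1
    have hgl : ∀ y, g y ≠ l := fun y => ((hgr _).mp ⟨y, rfl⟩).2
    ext (u | x) (v | y) <;> (try fin_cases u) <;> (try fin_cases v) <;>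
      simp [τ, pairSumEquiv, B, updateTwoRows_apply_left _ hij, updateTwoRows_apply_right,
        hrow, hkl, hkl.symm, hgk, hgl]
  obtain ⟨s, hs⟩ := det_submatrix_equiv_eq_units_smul B (pairSumEquiv hij hf hfr) τ
  exact ⟨s, by rw [← hs, hblock, det_fromBlocks_zero₁₂, det_one, one_mul]⟩

theorem det_updateRow_updateRow_smul_one (c : R) (hij : i ≠ j) (u v : n → R) :
    (((c • (1 : Matrix n n R)).updateRow i u).updateRow j v).det =
      (u i * v j - u j * v i) * c ^ (Fintype.card n - 2) := by
  set σ := pairSumEquiv hij (f := Subtype.val (p := fun x => x ≠ i ∧ x ≠ j))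
    Subtype.val_injective (by simp)
  have hcard : Fintype.card {x // x ≠ i ∧ x ≠ j} = Fintype.card n - 2 := by
    have := Fintype.card_congr σ
    simp only [Fintype.card_sum, Fintype.card_fin] at this
    omega
  have hblock : (((c • (1 : Matrix n n R)).updateRow i u).updateRow j v).submatrix σ σ =
      fromBlocks !![u i, u j; v i, v j]
        (of fun (t : Fin 2) (x : {x // x ≠ i ∧ x ≠ j}) => if t = 0 then u x else v x)
        0 (c • 1) := by
    ext (t | x) (t' | x')
    · fin_cases t <;> fin_cases t' <;> simp [σ, pairSumEquiv, updateRow_ne hij]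
    · fin_cases t <;> simp [σ, pairSumEquiv, updateRow_ne hij]
    · fin_cases t' <;> simp [σ, pairSumEquiv, x.2.1, x.2.2]
    · simp [σ, pairSumEquiv, x.2.1, x.2.2, one_apply, Subtype.ext_iff]
  rw [← det_submatrix_equiv_self σ, hblock, det_fromBlocks_zero₂₁, det_fin_two_of, det_smul,
    det_one, mul_one, hcard]

/-- Jacobi's complementary minor theorem for `2 × 2` minors of the adjugate. -/
theorem det_mul_det_updateTwoRows [IsDomain R] (A : Matrix n n R) (hA : A.det ≠ 0)
    (hij : i ≠ j) (k l : n) :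
    A.det * (A.updateTwoRows i j k l).det =
      A.adjugate k i * A.adjugate l j - A.adjugate k j * A.adjugate l i := by
  have key := congrArg det (updateTwoRows_mul A A.adjugate i j k l)
  rw [mul_adjugate, det_updateRow_updateRow_smul_one _ hij, det_mul, det_adjugate] at key
  have hcard : Fintype.card n - 1 = Fintype.card n - 2 + 1 := by
    have := Fintype.one_lt_card_iff.mpr ⟨i, j, hij⟩
    omega
  rw [hcard, pow_succ] at key
  exact mul_right_cancel₀ (pow_ne_zero _ hA) (by rw [← key]; ring)

/-- A three-term Plücker relation. -/
theorem det_updateTwoRows_eq_add_of_adjugate_symm [IsDomain R] (A : Matrix n n R)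
    (hA : A.det ≠ 0) {a b c d : n} (hab : a ≠ b) (hac : a ≠ c) (had : a ≠ d)
    (hbc : A.adjugate b c = A.adjugate c b) (hbd : A.adjugate b d = A.adjugate d b)
    (hcd : A.adjugate c d = A.adjugate d c) :
    (A.updateTwoRows a c b d).det =
      (A.updateTwoRows a d b c).det + (A.updateTwoRows a b c d).det := by
  refine mul_left_cancel₀ hA ?_
  rw [mul_add, det_mul_det_updateTwoRows A hA hac, det_mul_det_updateTwoRows A hA had,
    det_mul_det_updateTwoRows A hA hab, hbc, hbd, hcd]
  ring

end Minors

variable {n : Type*} [DecidableEq n] [Fintype n]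

theorem adjugate_mul_mul_of_mul_self_eq_one {R : Type*} [CommRing R] (A D : Matrix n n R)
    (hD : D * D = 1) : adjugate (D * A * D) = D * adjugate A * D := by
  have hadjD : adjugate D = D.det • D := by
    calc adjugate D = adjugate D * (D * D) := by rw [hD, Matrix.mul_one]
      _ = D.det • D := by rw [← Matrix.mul_assoc, adjugate_mul, Matrix.smul_mul, Matrix.one_mul]
  have hdet : D.det * D.det = 1 := by rw [← det_mul, hD, det_one]
  rw [adjugate_mul_distrib, adjugate_mul_distrib, hadjD, Matrix.mul_smul, Matrix.smul_mul,
    Matrix.mul_smul, smul_smul, hdet, one_smul, Matrix.mul_assoc]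

theorem det_eq_zero_of_finrank_lt {K P T : Type*} [Field K] [AddCommGroup P] [Module K P]
    [FiniteDimensional K P] [AddCommGroup T] [Module K T] [FiniteDimensional K T]
    (N : Matrix n n K) (ι : P →ₗ[K] n → K) (Θ : P →ₗ[K] T) (hΘ : ∀ p, Θ p = 0 → N *ᵥ ι p = 0)
    (hdim : Module.finrank K T + Module.finrank K (LinearMap.ker ι) < Module.finrank K P) :
    N.det = 0 := by
  have hker : ¬ LinearMap.ker Θ ≤ LinearMap.ker ι := fun h => by
    have := Submodule.finrank_mono h
    have := Θ.finrank_range_add_finrank_ker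
    have := Submodule.finrank_le (LinearMap.range Θ)
    omega
  obtain ⟨p, hp, hpι⟩ := SetLike.not_le_iff_exists.mp hker
  exact exists_mulVec_eq_zero_iff.mp ⟨ι p, hpι, hΘ p hp⟩

end Matrix

namespace Multigraph

theorem Connected.eq_of_forall_src_eq_tgt {E V : Type*} [Fintype E] [Fintype V]
    {G : Multigraph E V} (hG : G.Connected) {α : Type*} {g : V → α}
    (hg : ∀ e, g (G.src e) = g (G.tgt e)) (u v : V) : g u = g v := by
  induction hG u v with
  | refl => rfl
  | tail _ hadj ih =>
    obtain ⟨e, -, ⟨rfl, rfl⟩ | ⟨rfl, rfl⟩⟩ := hadj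
    exacts [ih.trans (hg e), ih.trans (hg e).symm]

section Incidence

variable {E V : Type*} (G : Multigraph E V) [DecidableEq V] {R : Type*} [CommRing R]

def incidence (R : Type*) [Ring R] : Matrix E V R := of fun e v => G.inc R e v

theorem incidence_mulVec [Fintype V] (φ : V → R) (e : E) :
    (G.incidence R *ᵥ φ) e = φ (G.src e) - φ (G.tgt e) := by
  simp [incidence, inc, mulVec, dotProduct, sub_mul, Finset.sum_sub_distrib, ite_mul]

theorem reducedIncidence_mulVec_sub [Fintype V] (v0 : V) (φ : V → R) (e : E) :
    ((G.incidence R).submatrix id (↑) *ᵥ fun v : {v // v ≠ v0} => φ v - φ v0) e =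
      φ (G.src e) - φ (G.tgt e) := by
  have h := G.incidence_mulVec (fun v => φ v - φ v0) e
  simp only [sub_sub_sub_cancel_right] at h
  have hv0 : ∑ v : {v // ¬v ≠ v0}, G.incidence R e v * (φ v - φ v0) = 0 :=
    Finset.sum_eq_zero fun v _ => by rw [not_not.mp v.2, sub_self, mul_zero]
  rw [← h, mulVec, dotProduct, mulVec, dotProduct,
    ← Fintype.sum_subtype_add_sum_subtype (· ≠ v0), hv0, add_zero]
  rfl

variable [Fintype E] {S : Finset V} {y : E → R}

theorem sum_vecMul_incidence (hy : ∀ e, y e ≠ 0 → G.src e ∈ S ∧ G.tgt e ∈ S) :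
    ∑ v ∈ S, (y ᵥ* G.incidence R) v = 0 := by
  simp only [vecMul, dotProduct]
  rw [Finset.sum_comm]
  refine Finset.sum_eq_zero fun e _ => ?_
  by_cases he : y e = 0
  · simp [he]
  · obtain ⟨hs, ht⟩ := hy e he
    simp [← Finset.mul_sum, incidence, inc, Finset.sum_sub_distrib, hs, ht]

theorem vecMul_incidence_eq_zero_of_notMem (hy : ∀ e, y e ≠ 0 → G.src e ∈ S ∧ G.tgt e ∈ S)
    {v : V} (hv : v ∉ S) : (y ᵥ* G.incidence R) v = 0 := by
  refine Finset.sum_eq_zero fun e _ => ?_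
  by_cases he : y e = 0
  · simp [he]
  · have hs : G.src e ≠ v := fun h => hv (h ▸ (hy e he).1)
    have ht : G.tgt e ≠ v := fun h => hv (h ▸ (hy e he).2)
    simp [incidence, inc, hs, ht]

theorem vecMul_incidence_eq_zero (hy : ∀ e, y e ≠ 0 → G.src e ∈ S ∧ G.tgt e ∈ S) {u : V}
    (hu : u ∈ S) (h : ∀ v ∈ S.erase u, (y ᵥ* G.incidence R) v = 0) :
    y ᵥ* G.incidence R = 0 := by
  funext v
  by_cases hv : v ∈ S
  · by_cases hvu : v = u
    · subst hvu
      have := G.sum_vecMul_incidence hy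
      rwa [← Finset.add_sum_erase S _ hv, Finset.sum_eq_zero h, add_zero] at this
    · exact h v (Finset.mem_erase.mpr ⟨hvu, hv⟩)
  · exact G.vecMul_incidence_eq_zero_of_notMem hy hv

end Incidence

section GraphMatrix

variable {E V : Type*} (G : Multigraph E V) [DecidableEq E] [DecidableEq V] {R : Type*}
  [CommRing R] (v0 : V)

/-- The matrix `M_G` with the edge variables specialised to the weights `w`. -/
def graphMatrix (w : E → R) : Matrix (E ⊕ {v // v ≠ v0}) (E ⊕ {v // v ≠ v0}) R :=
  fromBlocks (diagonal w) ((G.incidence R).submatrix id (↑))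
    (-((G.incidence R).submatrix id (↑))ᵀ) 0

theorem bigMatK_empty : G.bigMatK v0 ∅ = G.graphMatrix v0 MvPolynomial.X := by
  ext (e | v) (f | u) <;> simp [bigMatK, graphMatrix, incidence]

theorem map_graphMatrix {S : Type*} [CommRing S] (f : R →+* S) (w : E → R) :
    (G.graphMatrix v0 w).map f = G.graphMatrix v0 (f ∘ w) := by
  ext (e | v) (e' | u) <;> simp [graphMatrix, incidence, inc, diagonal, apply_ite f]

variable [Fintype E] [Fintype V]

theorem transpose_graphMatrix (w : E → R) :
    (G.graphMatrix v0 w)ᵀ = diagonal (Sum.elim (1 : E → R) (-1 : {v // v ≠ v0} → R)) *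
      G.graphMatrix v0 w * diagonal (Sum.elim (1 : E → R) (-1 : {v // v ≠ v0} → R)) := by
  ext (e | v) (e' | u)
  · by_cases h : e = e' <;> simp [graphMatrix, h, eq_comm]
  all_goals simp [graphMatrix]

theorem adjugate_graphMatrix_inl_comm (w : E → R) (e f : E) :
    (G.graphMatrix v0 w).adjugate (.inl e) (.inl f) =
      (G.graphMatrix v0 w).adjugate (.inl f) (.inl e) := by
  have hD : diagonal (Sum.elim (1 : E → R) (-1 : {v // v ≠ v0} → R)) *
      diagonal (Sum.elim 1 (-1)) = 1 := by
    rw [diagonal_mul_diagonal, ← diagonal_one]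
    congr 1
    ext (e | v) <;> simp
  have h := congrFun (congrFun (adjugate_transpose (G.graphMatrix v0 w)) (.inl f)) (.inl e)
  rw [transpose_graphMatrix, adjugate_mul_mul_of_mul_self_eq_one _ _ hD] at h
  simpa using h

theorem graphMatrix_mulVec_sumElim (w ψ : E → R) (φ : V → R) :
    G.graphMatrix v0 w *ᵥ Sum.elim ψ (fun v => φ v - φ v0) =
      Sum.elim (fun e => w e * ψ e + (φ (G.src e) - φ (G.tgt e)))
        (fun v : {v // v ≠ v0} => -(ψ ᵥ* G.incidence R) v) := by
  ext (e | v)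
  · simp [graphMatrix, fromBlocks_mulVec, mulVec_diagonal,
      ← G.reducedIncidence_mulVec_sub v0 φ e]
  · simp [graphMatrix, vecMul, mulVec, dotProduct, mul_comm]

theorem det_graphMatrix_one_ne_zero {K : Type*} [Field K] [LinearOrder K]
    [IsStrictOrderedRing K] (hG : G.Connected) :
    (G.graphMatrix v0 fun _ => (1 : K)).det ≠ 0 := by
  set B := (G.incidence K).submatrix id ((↑) : {v // v ≠ v0} → V)
  have hB : ∀ z, B *ᵥ z = 0 → z = 0 := by
    intro z hz
    set φ : V → K := fun v => if h : v = v0 then 0 else z ⟨v, h⟩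
    have hzφ : z = fun v : {v // v ≠ v0} => φ v - φ v0 := by
      funext v
      simp [φ, v.2]
    have hφ : ∀ e, φ (G.src e) = φ (G.tgt e) := fun e => by
      have := congrFun hz e
      rw [hzφ, G.reducedIncidence_mulVec_sub v0] at this
      exact sub_eq_zero.mp this
    rw [hzφ]
    funext v
    simp [hG.eq_of_forall_src_eq_tgt hφ v v0]
  rw [graphMatrix, diagonal_one, det_fromBlocks_one₁₁, zero_sub, Matrix.neg_mul, neg_neg]
  intro h
  obtain ⟨z, hz0, hz⟩ := exists_mulVec_eq_zero_iff.mpr h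
  have hzB : z ∈ LinearMap.ker (Bᵀ * B).mulVecLin := hz
  rw [ker_mulVecLin_transpose_mul_self] at hzB
  exact hz0 (hB z hzB)

theorem det_bigMatK_ne_zero (hG : G.Connected) : (G.bigMatK v0 ∅).det ≠ 0 := fun h => by
  apply G.det_graphMatrix_one_ne_zero (K := ℚ) v0 hG
  have := congrArg (MvPolynomial.eval fun _ => (1 : ℚ)) h
  rw [RingHom.map_det, map_zero, RingHom.mapMatrix_apply, bigMatK_empty, map_graphMatrix] at this
  simpa [Function.comp_def] using this

end GraphMatrix

section TwoVertexJoin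

variable {E V : Type*} [DecidableEq E] [DecidableEq V] (v0 : V)

def sidePotential {K : Type*} (S1 S2 : Finset V) (f : (S1 \ S2 : Finset V) → K) (κ : K)
    (v : V) : K :=
  if h : v ∈ S1 \ S2 then f ⟨v, h⟩ else κ

/-- Currents on `E1` and a potential constant outside `S1 \ S2`, grounded at `v0` because
`graphMatrix` has no column for `v0`. -/
def sideVec {K : Type*} [Field K] (S1 S2 : Finset V) (E1 : Finset E) :
    ((E1 → K) × ((S1 \ S2 : Finset V) → K) × K) →ₗ[K] (E ⊕ {v // v ≠ v0} → K) where
  toFun p := Sum.elim (fun e => if h : e ∈ E1 then p.1 ⟨e, h⟩ else 0)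
    (fun v => sidePotential S1 S2 p.2.1 p.2.2 v - sidePotential S1 S2 p.2.1 p.2.2 v0)
  map_add' p q := by ext (e | v) <;> simp [sidePotential] <;> split_ifs <;> ring
  map_smul' t p := by
    ext (e | v) <;> simp [sidePotential]
    split_ifs <;> ring

theorem ker_sideVec_le {K : Type*} [Field K] {S1 S2 : Finset V} (E1 : Finset E) {u : V}
    (hu : u ∈ S2) : LinearMap.ker (sideVec v0 S1 S2 E1 (K := K)) ≤ K ∙ (0, fun _ => 1, 1) := by
  rintro ⟨ψ, f, κ⟩ hp
  have hp := LinearMap.mem_ker.mp hp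
  set t := sidePotential S1 S2 f κ v0
  have hpot : ∀ v, sidePotential S1 S2 f κ v = t := fun v => by
    by_cases hv : v = v0
    · rw [hv]
    · exact sub_eq_zero.mp (congrFun hp (.inr ⟨v, hv⟩))
  refine Submodule.mem_span_singleton.mpr ⟨t, ?_⟩
  ext e
  · simpa [sideVec] using (congrFun hp (.inl e)).symm
  · simpa [sidePotential] using (hpot e).symm
  · simpa [sidePotential, hu] using (hpot u).symm

variable (G : Multigraph E V) [Fintype E] [Fintype V] {S1 S2 : Finset V} {E1 E2 : Finset E}
  (hEcover : E1 ∪ E2 = Finset.univ) (hEdisj : Disjoint E1 E2)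
  (hend1 : ∀ e ∈ E1, G.src e ∈ S1 ∧ G.tgt e ∈ S1)
  (hend2 : ∀ e ∈ E2, G.src e ∈ S2 ∧ G.tgt e ∈ S2) {a b c d : E}
include hEcover hend1 hend2

theorem updateTwoRows_graphMatrix_mulVec_eq_zero {R : Type*} [CommRing R] (w : E → R)
    (hc : c ∉ E1) (hd : d ∉ E1) {ψ : E → R} (hψ : ∀ e ∉ E1, ψ e = 0) {φ : V → R}
    (hφ : ∀ v ∈ S2, ∀ v' ∈ S2, φ v = φ v')
    (hohm : ∀ e ∈ E1, e ≠ a → e ≠ b → w e * ψ e + (φ (G.src e) - φ (G.tgt e)) = 0)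
    {u : V} (hu : u ∈ S1) (hflow : ∀ v ∈ S1.erase u, (ψ ᵥ* G.incidence R) v = 0) :
    (G.graphMatrix v0 w).updateTwoRows (.inl a) (.inl b) (.inl c) (.inl d) *ᵥ
      Sum.elim ψ (fun v => φ v - φ v0) = 0 := by
  have hsupp : ∀ e, ψ e ≠ 0 → G.src e ∈ S1 ∧ G.tgt e ∈ S1 :=
    fun e he => hend1 e (not_not.mp (mt (hψ e) he))
  have hcons := G.vecMul_incidence_eq_zero hsupp hu hflow
  rw [updateTwoRows_mulVec, graphMatrix_mulVec_sumElim]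
  ext (e | v)
  · by_cases hb : e = b
    · rw [hb, update_self]
      exact hψ d hd
    rw [update_of_ne (by simpa using hb)]
    by_cases ha : e = a
    · rw [ha, update_self]
      exact hψ c hc
    rw [update_of_ne (by simpa using ha), Sum.elim_inl]
    by_cases he : e ∈ E1
    · exact hohm e he ha hb
    · have he2 : e ∈ E2 := by simpa [he] using Finset.ext_iff.mp hEcover e
      rw [hψ e he, hφ _ (hend2 e he2).1 _ (hend2 e he2).2, mul_zero, sub_self, add_zero]
      rfl
  · rw [update_of_ne Sum.inr_ne_inl, update_of_ne Sum.inr_ne_inl, Sum.elim_inr, hcons]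
    exact neg_zero

include hEdisj

theorem det_updateTwoRows_graphMatrix_eq_zero {K : Type*} [Field K] (w : E → K) {v1 v2 : V}
    (hinter : S1 ∩ S2 = {v1, v2}) (ha : a ∈ E1) (hb : b ∈ E1) (hc : c ∈ E2) (hd : d ∈ E2)
    (hab : a ≠ b) :
    ((G.graphMatrix v0 w).updateTwoRows (.inl a) (.inl b) (.inl c) (.inl d)).det = 0 := by
  obtain ⟨hv1S1, hv1S2⟩ := Finset.mem_inter.mp (hinter ▸ Finset.mem_insert_self v1 {v2})
  set ι := sideVec v0 S1 S2 E1 (K := K)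
  -- `Θ p` lists Ohm's law on `E1 \ {a, b}` and Kirchhoff's law on `S1 \ {v1}` for `ι p`.
  let Θ := (LinearMap.funLeft K K (fun e : (E1.erase a).erase b => Sum.inl e.1) ∘ₗ
      (G.graphMatrix v0 w).mulVecLin ∘ₗ ι).prod
    (LinearMap.funLeft K K (fun v : S1.erase v1 => v.1) ∘ₗ (G.incidence K).vecMulLinear ∘ₗ
      LinearMap.funLeft K K Sum.inl ∘ₗ ι)
  refine det_eq_zero_of_finrank_lt _ ι Θ (fun p hp => ?_) ?_
  · obtain ⟨hohm, hflow⟩ := Prod.ext_iff.mp hp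
    have hιp : ι p = Sum.elim (fun e => if h : e ∈ E1 then p.1 ⟨e, h⟩ else 0)
        (fun v : {v // v ≠ v0} =>
          sidePotential S1 S2 p.2.1 p.2.2 v - sidePotential S1 S2 p.2.1 p.2.2 v0) := rfl
    rw [hιp]
    refine G.updateTwoRows_graphMatrix_mulVec_eq_zero v0 hEcover hend1 hend2 w
      (Finset.disjoint_right.mp hEdisj hc) (Finset.disjoint_right.mp hEdisj hd)
      (fun e he => dif_neg he) (fun v hv v' hv' => by simp [sidePotential, hv, hv'])
      (fun e he hea heb => ?_) hv1S1 (fun v hv => congrFun hflow ⟨v, hv⟩)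
    have := congrFun hohm ⟨e, Finset.mem_erase.mpr ⟨heb, Finset.mem_erase.mpr ⟨hea, he⟩⟩⟩
    simpa [Θ, hιp, graphMatrix_mulVec_sumElim] using this
  · have hker : Module.finrank K (LinearMap.ker ι) ≤ 1 :=
      (Submodule.finrank_mono (ker_sideVec_le v0 E1 hv1S2)).trans
        ((finrank_span_le_card (R := K) _).trans (by simp))
    have hsdiff := Finset.card_sdiff_add_card_inter S1 S2
    have hinter2 : (S1 ∩ S2).card ≤ 2 := hinter ▸ Finset.card_le_two
    have hE1 : 2 ≤ E1.card := (Finset.card_pair hab).symm.trans_le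
      (Finset.card_le_card (Finset.insert_subset ha (Finset.singleton_subset_iff.mpr hb)))
    simp only [Module.finrank_prod, Module.finrank_fintype_fun_eq_card, Fintype.card_coe,
      Module.finrank_self, Finset.card_erase_of_mem (Finset.mem_erase.mpr ⟨hab.symm, hb⟩),
      Finset.card_erase_of_mem ha, Finset.card_erase_of_mem hv1S1]
    omega

theorem det_updateTwoRows_bigMatK_eq_zero {v1 v2 : V} (hinter : S1 ∩ S2 = {v1, v2})
    (ha : a ∈ E1) (hb : b ∈ E1) (hc : c ∈ E2) (hd : d ∈ E2) (hab : a ≠ b) :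
    ((G.bigMatK v0 ∅).updateTwoRows (.inl a) (.inl b) (.inl c) (.inl d)).det = 0 := by
  apply IsFractionRing.injective (MvPolynomial E ℚ) (FractionRing (MvPolynomial E ℚ))
  rw [RingHom.map_det, map_zero, RingHom.mapMatrix_apply, map_updateTwoRows, bigMatK_empty,
    map_graphMatrix]
  exact G.det_updateTwoRows_graphMatrix_eq_zero v0 hEcover hEdisj hend1 hend2 _ hinter
    ha hb hc hd hab

end TwoVertexJoin

section Dodgson

variable {E V : Type*} [Fintype E] [LinearOrder E]

theorem range_sumMap_orderIsoOfFin_compl {W : Type*} {p q : E} {k : ℕ}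
    (h : ({p, q} : Finset E)ᶜ.card = k) (y : E ⊕ W) :
    y ∈ Set.range (Sum.map (fun i => ((({p, q} : Finset E)ᶜ.orderIsoOfFin h i : E))) id) ↔
      y ≠ .inl p ∧ y ≠ .inl q := by
  rcases y with e | w
  · simp only [Set.mem_range, Sum.exists, Sum.map_inl, Sum.map_inr, Sum.inl.injEq,
      reduceCtorEq, exists_false, or_false, Finset.coe_orderIsoOfFin_apply]
    rw [← Set.mem_range, Finset.range_orderEmbOfFin]
    simp [and_comm]
  · simp

theorem dodgson_pair_eq_units_smul (G : Multigraph E V) [Fintype V] [DecidableEq V] (v0 : V)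
    {p q r s : E} (hpq : p ≠ q) (hrs : r ≠ s) :
    ∃ t : ℤˣ, G.dodgson v0 {p, q} {r, s} ∅ =
      t • ((G.bigMatK v0 ∅).updateTwoRows (.inl p) (.inl q) (.inl r) (.inl s)).det := by
  have hcard : ({p, q} : Finset E).card = ({r, s} : Finset E).card := by
    rw [Finset.card_pair hpq, Finset.card_pair hrs]
  rw [dodgson, dif_pos hcard]
  exact (G.bigMatK v0 ∅).det_submatrix_eq_units_smul_det_updateTwoRows (by simpa) (by simpa)
    ((Subtype.val_injective.comp (OrderIso.injective _)).sumMap injective_id)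
    ((Subtype.val_injective.comp (OrderIso.injective _)).sumMap injective_id)
    (range_sumMap_orderIsoOfFin_compl _) (range_sumMap_orderIsoOfFin_compl _)

end Dodgson

end Multigraph

theorem two_vertex_join_product_is_square_general {E V : Type*} [Fintype E] [LinearOrder E]
    [Fintype V] [DecidableEq V] (G : Multigraph E V) (hconn : G.Connected) (v0 : V)
    (S1 S2 : Finset V) (v1 v2 : V)
    (hinter : S1 ∩ S2 = {v1, v2})
    (E1 E2 : Finset E) (hEcover : E1 ∪ E2 = Finset.univ) (hEdisj : Disjoint E1 E2)
    (hend1 : ∀ e ∈ E1, G.src e ∈ S1 ∧ G.tgt e ∈ S1)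
    (hend2 : ∀ e ∈ E2, G.src e ∈ S2 ∧ G.tgt e ∈ S2)
    (a b c d : E) (ha : a ∈ E1) (hb : b ∈ E1) (hc : c ∈ E2) (hd : d ∈ E2)
    (hab : a ≠ b) :
    ∃ ε : ℚ, (ε = 1 ∨ ε = -1) ∧
      G.dodgson v0 {a, c} {b, d} ∅ = ε • G.dodgson v0 {a, d} {b, c} ∅ ∧
      G.dodgson v0 {a, c} {b, d} ∅ * (ε • G.dodgson v0 {a, d} {b, c} ∅)
        = (G.dodgson v0 {a, c} {b, d} ∅) ^ 2 := by
  have hne : ∀ {e f}, e ∈ E1 → f ∈ E2 → e ≠ f :=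
    fun he hf h => Finset.disjoint_left.mp hEdisj he (h ▸ hf)
  have hsymm (e f : E) : (G.bigMatK v0 ∅).adjugate (.inl e) (.inl f) =
      (G.bigMatK v0 ∅).adjugate (.inl f) (.inl e) := by
    rw [G.bigMatK_empty]
    exact G.adjugate_graphMatrix_inl_comm v0 _ e f
  have hswap : ((G.bigMatK v0 ∅).updateTwoRows (.inl a) (.inl c) (.inl b) (.inl d)).det =
      ((G.bigMatK v0 ∅).updateTwoRows (.inl a) (.inl d) (.inl b) (.inl c)).det := by
    rw [det_updateTwoRows_eq_add_of_adjugate_symm _ (G.det_bigMatK_ne_zero v0 hconn)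
      (by simpa) (by simpa using hne ha hc) (by simpa using hne ha hd) (hsymm b c) (hsymm b d)
      (hsymm c d), G.det_updateTwoRows_bigMatK_eq_zero v0 hEcover hEdisj hend1 hend2 hinter
      ha hb hc hd hab, add_zero]
  obtain ⟨s, hs⟩ := G.dodgson_pair_eq_units_smul v0 (hne ha hc) (hne hb hd)
  obtain ⟨t, ht⟩ := G.dodgson_pair_eq_units_smul v0 (hne ha hd) (hne hb hc)
  have key : G.dodgson v0 {a, c} {b, d} ∅ = (s * t) • G.dodgson v0 {a, d} {b, c} ∅ := by
    rw [hs, ht, hswap, smul_smul, mul_assoc, Int.units_mul_self, mul_one]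
  rw [Units.smul_def, ← Int.cast_smul_eq_zsmul ℚ] at key
  refine ⟨_, ?_, key, by rw [← key, sq]⟩
  rcases Int.units_eq_one_or (s * t) with h | h <;> simp [h]

/-- If `G` is a two-vertex join of `G₁` and `G₂`, with edges
`a, b ∈ G₁` and `c, d ∈ G₂` (playing the roles of the edges `1, 2` and `3, 4`), then (with
the consistent sign `ε` for the Dodgson polynomials) the product
`Ψ^{13,24}_G · Ψ^{14,23}_G` is the perfect square `(Ψ^{13,24}_G)²`. -/
theorem two_vertex_join_product_is_square {E V : Type*} [Fintype E] [LinearOrder E]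
    [Fintype V] [DecidableEq V] (G : Multigraph E V) (hconn : G.Connected) (v0 : V)
    (S1 S2 : Finset V) (v1 v2 : V) (hv : v1 ≠ v2)
    (hcover : S1 ∪ S2 = Finset.univ) (hinter : S1 ∩ S2 = {v1, v2})
    (E1 E2 : Finset E) (hEcover : E1 ∪ E2 = Finset.univ) (hEdisj : Disjoint E1 E2)
    (hend1 : ∀ e ∈ E1, G.src e ∈ S1 ∧ G.tgt e ∈ S1)
    (hend2 : ∀ e ∈ E2, G.src e ∈ S2 ∧ G.tgt e ∈ S2)
    (a b c d : E) (ha : a ∈ E1) (hb : b ∈ E1) (hc : c ∈ E2) (hd : d ∈ E2)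
    (hab : a ≠ b) (hcd : c ≠ d) :
    ∃ ε : ℚ, (ε = 1 ∨ ε = -1) ∧
      G.dodgson v0 {a, c} {b, d} ∅ = ε • G.dodgson v0 {a, d} {b, c} ∅ ∧
      G.dodgson v0 {a, c} {b, d} ∅ * (ε • G.dodgson v0 {a, d} {b, c} ∅)
        = (G.dodgson v0 {a, c} {b, d} ∅) ^ 2 :=
  two_vertex_join_product_is_square_general G hconn v0 S1 S2 v1 v2 hinter E1 E2 hEcover hEdisj hend1
    hend2 a b c d ha hb hc hd hab
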